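/- arXiv:2412.10841 — 2 statements merged into one kernel-verified Lean document; each statement's English description precedes it below -/
import Mathlib

section
/- Let σ ⊂ ℝ² be the cone generated by primitive vectors ρ₁=(a,b) and ρ₂=(c,d) with |ad−bc| = d₀ > 1. The lattice points v₀=ρ₁, v₁, …, vₖ, vₖ₊₁=ρ₂ on the compact boundary of the convex hull of (σ ∩ ℤ²) \ {0} satisfy: each consecutive pair (vᵢ, vᵢ₊₁) forms a ℤ-basis of ℤ², and for 1 ≤ i ≤ k there are integers aᵢ ≤ −2 with vᵢ₋₁ + vᵢ₊₁ + aᵢvᵢ = 0. -/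
/-- The 2×2 determinant of two vectors in ℤ². -/
def det2 (u v : ℤ × ℤ) : ℤ := u.1 * v.2 - u.2 * v.1

/-- The real vector associated to a lattice vector in ℤ². -/
def toR (u : ℤ × ℤ) : ℝ × ℝ := ((u.1 : ℝ), (u.2 : ℝ))

/-- The cone `σ = ℝ≥0·ρ₁ + ℝ≥0·ρ₂ ⊂ ℝ²`. -/
def coneOf (ρ₁ ρ₂ : ℤ × ℤ) : Set (ℝ × ℝ) :=
  {x | ∃ s t : ℝ, 0 ≤ s ∧ 0 ≤ t ∧ x = s • toR ρ₁ + t • toR ρ₂}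

/-- The nonzero lattice points of the cone `σ`, as points of ℝ². -/
def latticePts (ρ₁ ρ₂ : ℤ × ℤ) : Set (ℝ × ℝ) :=
  {x | ∃ m : ℤ × ℤ, m ≠ 0 ∧ toR m = x ∧ x ∈ coneOf ρ₁ ρ₂}

/-- The convex hull `Conv(σ ∩ (ℤ² \ {0}))`. -/
def hullOf (ρ₁ ρ₂ : ℤ × ℤ) : Set (ℝ × ℝ) := convexHull ℝ (latticePts ρ₁ ρ₂)

/-- The compact boundary of the hull: the points of the hull from which one
cannot go further down inside the cone, i.e. which are not of the form
`y + z` with `y` in the hull and `z` a nonzero vector of `σ`. -/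
def compactBoundary (ρ₁ ρ₂ : ℤ × ℤ) : Set (ℝ × ℝ) :=
  {x | x ∈ hullOf ρ₁ ρ₂ ∧
    ¬ ∃ y ∈ hullOf ρ₁ ρ₂, ∃ z ∈ coneOf ρ₁ ρ₂, z ≠ 0 ∧ x = y + z}


def detR (x y : ℝ × ℝ) : ℝ := x.1 * y.2 - x.2 * y.1

lemma detR_toR (a b : ℤ × ℤ) : detR (toR a) (toR b) = (det2 a b : ℝ) := by
  simp [detR, toR, det2]

lemma toR_eq_zero {m : ℤ × ℤ} : toR m = 0 ↔ m = 0 := by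
  simp [toR, Prod.ext_iff]

lemma toR_add (a b : ℤ × ℤ) : toR (a + b) = toR a + toR b := by
  simp [toR, Prod.ext_iff]

lemma toR_sub (a b : ℤ × ℤ) : toR (a - b) = toR a - toR b := by
  simp [toR, Prod.ext_iff]

lemma cramer (u w x : ℝ × ℝ) : detR u w • x = detR x w • u + detR u x • w := by
  refine Prod.ext ?_ ?_ <;>
    simp [detR, Prod.smul_fst, Prod.smul_snd, smul_eq_mul] <;> ring

lemma detR_add_right (u x y : ℝ × ℝ) : detR u (x + y) = detR u x + detR u y := by
  simp [detR]; ring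

lemma detR_add_left (u x y : ℝ × ℝ) : detR (x + y) u = detR x u + detR y u := by
  simp [detR]; ring

lemma detR_smul_right (u : ℝ × ℝ) (c : ℝ) (x : ℝ × ℝ) : detR u (c • x) = c * detR u x := by
  simp [detR, Prod.smul_fst, Prod.smul_snd, smul_eq_mul]; ring

lemma detR_smul_left (u : ℝ × ℝ) (c : ℝ) (x : ℝ × ℝ) : detR (c • x) u = c * detR x u := by
  simp [detR, Prod.smul_fst, Prod.smul_snd, smul_eq_mul]; ring

lemma detR_self (u : ℝ × ℝ) : detR u u = 0 := by simp [detR]; ring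

lemma detR_swap (u v : ℝ × ℝ) : detR u v = - detR v u := by simp [detR]; ring

lemma detR_sub_right (u x y : ℝ × ℝ) : detR u (x - y) = detR u x - detR u y := by
  simp [detR]; ring

lemma detR_sub_left (u x y : ℝ × ℝ) : detR (x - y) u = detR x u - detR y u := by
  simp [detR]; ring

section Cone
variable {ρ₁ ρ₂ : ℤ × ℤ} (hdpos : 0 < detR (toR ρ₁) (toR ρ₂))
include hdpos

lemma mem_cone_iff (x : ℝ × ℝ) :
    x ∈ coneOf ρ₁ ρ₂ ↔ 0 ≤ detR (toR ρ₁) x ∧ 0 ≤ detR x (toR ρ₂) := by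
  constructor
  · rintro ⟨s, t, hs, ht, rfl⟩
    constructor
    · rw [detR_add_right, detR_smul_right, detR_smul_right, detR_self]
      nlinarith [hdpos]
    · rw [detR_add_left, detR_smul_left, detR_smul_left, detR_self]
      have := detR_swap (toR ρ₂) (toR ρ₁)
      nlinarith [hdpos]
  · rintro ⟨h1, h2⟩
    have hne : detR (toR ρ₁) (toR ρ₂) ≠ 0 := ne_of_gt hdpos
    refine ⟨detR x (toR ρ₂) / detR (toR ρ₁) (toR ρ₂),
            detR (toR ρ₁) x / detR (toR ρ₁) (toR ρ₂),
            div_nonneg h2 hdpos.le, div_nonneg h1 hdpos.le, ?_⟩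
    have hx : x = (detR (toR ρ₁) (toR ρ₂))⁻¹ • (detR (toR ρ₁) (toR ρ₂) • x) := by
      rw [smul_smul, inv_mul_cancel₀ hne, one_smul]
    conv_lhs => rw [hx, cramer (toR ρ₁) (toR ρ₂) x]
    rw [smul_add, smul_smul, smul_smul]
    congr 1 <;> rw [div_eq_inv_mul]

lemma cone_add {x y : ℝ × ℝ} (hx : x ∈ coneOf ρ₁ ρ₂) (hy : y ∈ coneOf ρ₁ ρ₂) :
    x + y ∈ coneOf ρ₁ ρ₂ := by
  rw [mem_cone_iff hdpos] at hx hy ⊢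
  rw [detR_add_right, detR_add_left]
  constructor <;> linarith [hx.1, hx.2, hy.1, hy.2]

lemma cone_smul {c : ℝ} (hc : 0 ≤ c) {x : ℝ × ℝ} (hx : x ∈ coneOf ρ₁ ρ₂) :
    c • x ∈ coneOf ρ₁ ρ₂ := by
  rw [mem_cone_iff hdpos] at hx ⊢
  rw [detR_smul_right, detR_smul_left]
  exact ⟨mul_nonneg hc hx.1, mul_nonneg hc hx.2⟩

lemma cone_pointed {x y : ℝ × ℝ} (hx : x ∈ coneOf ρ₁ ρ₂) (hy : y ∈ coneOf ρ₁ ρ₂)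
    (hxy : x + y = 0) : x = 0 := by
  rw [mem_cone_iff hdpos] at hx hy
  have h1 : detR (toR ρ₁) x + detR (toR ρ₁) y = 0 := by
    rw [← detR_add_right, hxy, detR]; simp
  have h2 : detR x (toR ρ₂) + detR y (toR ρ₂) = 0 := by
    rw [← detR_add_left, hxy, detR]; simp
  have e1 : detR (toR ρ₁) x = 0 := le_antisymm (by linarith [hy.1]) hx.1
  have e2 : detR x (toR ρ₂) = 0 := le_antisymm (by linarith [hy.2]) hx.2
  have h := cramer (toR ρ₁) (toR ρ₂) x
  rw [e1, e2, zero_smul, zero_smul, add_zero] at h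
  have := smul_right_injective (ℝ × ℝ) (ne_of_gt hdpos)
  have h0 : detR (toR ρ₁) (toR ρ₂) • x = detR (toR ρ₁) (toR ρ₂) • (0 : ℝ × ℝ) := by
    rw [h, smul_zero]
  exact this h0

lemma convex_cone : Convex ℝ (coneOf ρ₁ ρ₂) := by
  intro x hx y hy a b ha hb hab
  rw [mem_cone_iff hdpos] at hx hy ⊢
  rw [detR_add_right, detR_add_left, detR_smul_right, detR_smul_right,
    detR_smul_left, detR_smul_left]
  constructor <;> nlinarith [hx.1, hx.2, hy.1, hy.2]

lemma hull_subset_cone : hullOf ρ₁ ρ₂ ⊆ coneOf ρ₁ ρ₂ := by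
  apply convexHull_min _ (convex_cone hdpos)
  rintro x ⟨m, hm, rfl, hc⟩
  exact hc

omit hdpos in
lemma lattice_mem_hull {m : ℤ × ℤ} (hm : m ≠ 0) (hc : toR m ∈ coneOf ρ₁ ρ₂) :
    toR m ∈ hullOf ρ₁ ρ₂ :=
  subset_convexHull ℝ _ ⟨m, hm, rfl, hc⟩

end Cone

section Hull
variable {ρ₁ ρ₂ : ℤ × ℤ} (hdpos : 0 < detR (toR ρ₁) (toR ρ₂))
include hdpos

lemma hull_add_lattice {y : ℝ × ℝ} (hy : y ∈ hullOf ρ₁ ρ₂) {g : ℤ × ℤ}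
    (hg : toR g ∈ coneOf ρ₁ ρ₂) : y + toR g ∈ hullOf ρ₁ ρ₂ := by
  have himg : (fun x => toR g + x) '' latticePts ρ₁ ρ₂ ⊆ latticePts ρ₁ ρ₂ := by
    rintro _ ⟨x, ⟨m, hm0, rfl, hmc⟩, rfl⟩
    refine ⟨m + g, ?_, ((toR_add m g).trans (add_comm _ _)), ?_⟩
    · intro h0
      have : toR m + toR g = 0 := by rw [← toR_add, h0, toR_eq_zero.mpr rfl]
      have hm' : toR m = 0 := cone_pointed hdpos hmc hg this
      exact hm0 (toR_eq_zero.mp hm')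
    · show toR g + toR m ∈ coneOf ρ₁ ρ₂
      rw [add_comm]
      exact cone_add hdpos hmc hg
  have key : (fun x => toR g + x) '' hullOf ρ₁ ρ₂ ⊆ hullOf ρ₁ ρ₂ := by
    have e := (AffineEquiv.constVAdd ℝ (ℝ × ℝ) (toR g)).toAffineMap.image_convexHull
      (latticePts ρ₁ ρ₂)
    have e' : (fun x => toR g + x) '' hullOf ρ₁ ρ₂
        = convexHull ℝ ((fun x => toR g + x) '' latticePts ρ₁ ρ₂) := by
      exact e
    rw [e']
    exact convexHull_mono himg
  have : toR g + y ∈ hullOf ρ₁ ρ₂ := key ⟨y, hy, rfl⟩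
  rwa [add_comm] at this

lemma hull_add_smul_lattice {y : ℝ × ℝ} (hy : y ∈ hullOf ρ₁ ρ₂) {g : ℤ × ℤ}
    (hg : toR g ∈ coneOf ρ₁ ρ₂) {s : ℝ} (hs : 0 ≤ s) :
    y + s • toR g ∈ hullOf ρ₁ ρ₂ := by
  obtain ⟨n, hn⟩ : ∃ n : ℕ, s ≤ n := ⟨Nat.ceil s, Nat.le_ceil s⟩
  induction n generalizing y s with
  | zero =>
    have : s = 0 := le_antisymm (by exact_mod_cast hn) hs
    simpa [this] using hy
  | succ n IH =>
    rcases le_or_gt s 1 with h1 | h1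
    · have hcvx := convex_convexHull ℝ (latticePts ρ₁ ρ₂)
      have := hcvx hy (hull_add_lattice hdpos hy hg) (by linarith : (0:ℝ) ≤ 1 - s) hs
        (by ring)
      have heq : (1 - s) • y + s • (y + toR g) = y + s • toR g := by
        rw [smul_add]; module
      rwa [heq] at this
    · have hy' : y + toR g ∈ hullOf ρ₁ ρ₂ := hull_add_lattice hdpos hy hg
      have := IH hy' (s := s - 1) (by linarith) (by push_cast; push_cast at hn; linarith)
      have heq : y + toR g + (s - 1) • toR g = y + s • toR g := by
        rw [sub_smul, one_smul]; abel
      rwa [heq] at this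

lemma hull_add_cone {y z : ℝ × ℝ} (hy : y ∈ hullOf ρ₁ ρ₂) (hz : z ∈ coneOf ρ₁ ρ₂) :
    y + z ∈ hullOf ρ₁ ρ₂ := by
  obtain ⟨s, t, hs, ht, rfl⟩ := hz
  have h1 : toR ρ₁ ∈ coneOf ρ₁ ρ₂ := ⟨1, 0, zero_le_one, le_refl 0, by simp⟩
  have h2 : toR ρ₂ ∈ coneOf ρ₁ ρ₂ := ⟨0, 1, le_refl 0, zero_le_one, by simp⟩
  have := hull_add_smul_lattice hdpos (hull_add_smul_lattice hdpos hy h1 hs) h2 ht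
  rwa [add_assoc] at this

omit hdpos in
lemma exists_lattice_le {y : ℝ × ℝ} (hy : y ∈ hullOf ρ₁ ρ₂) (f : ℝ × ℝ → ℝ)
    (hf : IsLinearMap ℝ f) :
    ∃ m : ℤ × ℤ, m ≠ 0 ∧ toR m ∈ coneOf ρ₁ ρ₂ ∧ f (toR m) ≤ f y := by
  by_contra hc
  push_neg at hc
  have hsub : latticePts ρ₁ ρ₂ ⊆ {x | f y < f x} := by
    rintro _ ⟨m, hm0, rfl, hmc⟩
    exact hc m hm0 hmc
  have hcv : Convex ℝ {x : ℝ × ℝ | f y < f x} := by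
    intro p hp q hq a b ha hb hab
    simp only [Set.mem_setOf_eq] at hp hq ⊢
    rw [hf.map_add, hf.map_smul, hf.map_smul, smul_eq_mul, smul_eq_mul]
    rcases eq_or_lt_of_le ha with h | h
    · have hb1 : b = 1 := by linarith
      rw [← h, hb1]; simpa using hq
    · have h3 : a * f y + b * f y = f y := by rw [← add_mul, hab, one_mul]
      nlinarith [mul_lt_mul_of_pos_left hp h, mul_le_mul_of_nonneg_left hq.le hb]
  have := convexHull_min hsub hcv hy
  simp only [Set.mem_setOf_eq] at this
  exact lt_irrefl _ this

end Hull

lemma isLinear_detR_right (v : ℝ × ℝ) : IsLinearMap ℝ (fun x => detR v x) :=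
  ⟨fun x y => detR_add_right v x y, fun c x => by
    simp only [detR_smul_right, smul_eq_mul]⟩

lemma isLinear_detR_left (v : ℝ × ℝ) : IsLinearMap ℝ (fun x => detR x v) :=
  ⟨fun x y => detR_add_left v x y, fun c x => by
    simp only [detR_smul_left, smul_eq_mul]⟩

lemma parallel_scale {U ω : ℝ × ℝ} (hU : U ≠ 0) (h : detR U ω = 0) :
    ∃ c : ℝ, ω = c • U := by
  have h' : U.1 * ω.2 - U.2 * ω.1 = 0 := h
  by_cases h1 : U.1 ≠ 0
  · refine ⟨ω.1 / U.1, Prod.ext ?_ ?_⟩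
    · show ω.1 = ω.1 / U.1 * U.1
      rw [div_mul_cancel₀ _ h1]
    · show ω.2 = ω.1 / U.1 * U.2
      rw [div_mul_eq_mul_div, eq_div_iff h1]
      linear_combination h'
  · push_neg at h1
    have h2 : U.2 ≠ 0 := by
      intro h2; exact hU (Prod.ext_iff.mpr ⟨h1, h2⟩)
    refine ⟨ω.2 / U.2, Prod.ext ?_ ?_⟩
    · show ω.1 = ω.2 / U.2 * U.1
      rw [div_mul_eq_mul_div, eq_div_iff h2]
      linear_combination -h'
    · show ω.2 = ω.2 / U.2 * U.2
      rw [div_mul_cancel₀ _ h2]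

lemma scale_nonneg {ρ₁ ρ₂ : ℤ × ℤ} (hdpos : 0 < detR (toR ρ₁) (toR ρ₂))
    {U : ℝ × ℝ} (hUc : U ∈ coneOf ρ₁ ρ₂) (hU0 : U ≠ 0) {c : ℝ}
    (hc : c • U ∈ coneOf ρ₁ ρ₂) : 0 ≤ c := by
  by_contra hneg
  push_neg at hneg
  have h1 : (-c) • U ∈ coneOf ρ₁ ρ₂ := cone_smul hdpos (by linarith) hUc
  have h0 : c • U + (-c) • U = 0 := by module
  have := cone_pointed hdpos hc h1 h0
  rcases smul_eq_zero.mp this with h | h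
  · linarith
  · exact hU0 h

lemma segment_cross {x₁ x₂ : ℝ × ℝ} (f : ℝ × ℝ → ℝ) (hf : IsLinearMap ℝ f)
    (h1 : f x₁ < 0) (h2 : 0 ≤ f x₂) :
    ∃ θ : ℝ, 0 < θ ∧ θ ≤ 1 ∧ f ((1 - θ) • x₁ + θ • x₂) = 0 := by
  have hden : 0 < f x₂ - f x₁ := by linarith
  refine ⟨(-f x₁) / (f x₂ - f x₁), by apply div_pos <;> linarith, ?_, ?_⟩
  · rw [div_le_one hden]; linarith
  · rw [hf.map_add, hf.map_smul, hf.map_smul, smul_eq_mul, smul_eq_mul]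
    field_simp
    ring

lemma combo_lt {a b ga gb C : ℝ} (ha : 0 ≤ a) (hb : 0 ≤ b) (hab : a + b = 1)
    (h1 : ga < C) (h2 : gb < C) : a * ga + b * gb < C := by
  have h3 : a * C + b * C = C := by rw [← add_mul, hab, one_mul]
  rcases eq_or_lt_of_le ha with h | h
  · have hb1 : b = 1 := by linarith
    rw [← h, hb1]; linarith
  · nlinarith [mul_lt_mul_of_pos_left h1 h, mul_le_mul_of_nonneg_left h2.le hb]

set_option maxHeartbeats 2000000 in
lemma sector_step (ρ₁ ρ₂ : ℤ × ℤ) (hdpos : 0 < detR (toR ρ₁) (toR ρ₂))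
    (u w : ℤ × ℤ)
    (huc : toR u ∈ coneOf ρ₁ ρ₂) (hwc : toR w ∈ coneOf ρ₁ ρ₂)
    (hu_min : ∀ y ∈ hullOf ρ₁ ρ₂, ∀ z ∈ coneOf ρ₁ ρ₂, z ≠ 0 → toR u ≠ y + z)
    (hw_min : ∀ y ∈ hullOf ρ₁ ρ₂, ∀ z ∈ coneOf ρ₁ ρ₂, z ≠ 0 → toR w ≠ y + z)
    (hnb : ∀ m : ℤ × ℤ, 0 < det2 u m → 0 < det2 m w → toR m ∉ compactBoundary ρ₁ ρ₂)
    (n : ℕ) :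
    ∀ m : ℤ × ℤ, 0 < det2 u m → 0 < det2 m w → det2 u m + det2 m w ≤ det2 u w →
      (det2 u m + det2 m w).toNat ≤ n → False := by
  induction n with
  | zero => intro m h1 h2 _ h4; omega
  | succ n IH =>
  intro m hb ha hsum hn
  have hDint : 0 < det2 u w := by omega
  have hD : (0:ℝ) < detR (toR u) (toR w) := by rw [detR_toR]; exact_mod_cast hDint
  have hDne : detR (toR u) (toR w) ≠ 0 := ne_of_gt hD
  have hB : (0:ℝ) < detR (toR u) (toR m) := by rw [detR_toR]; exact_mod_cast hb
  have hA : (0:ℝ) < detR (toR m) (toR w) := by rw [detR_toR]; exact_mod_cast ha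
  have hsumR : detR (toR u) (toR m) + detR (toR m) (toR w) ≤ detR (toR u) (toR w) := by
    rw [detR_toR, detR_toR, detR_toR]; exact_mod_cast hsum
  have hu0 : toR u ≠ (0:ℝ × ℝ) := by
    intro h; rw [h] at hB; simp [detR] at hB
  have hw0 : toR w ≠ (0:ℝ × ℝ) := by
    intro h; rw [h] at hA; simp [detR] at hA
  have hm0 : m ≠ 0 := by
    intro h; rw [h] at hb; simp [det2] at hb
  -- m is in the cone and the hull
  have hMc : toR m ∈ coneOf ρ₁ ρ₂ := by
    have h := cramer (toR u) (toR w) (toR m)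
    have h2 : detR (toR m) (toR w) • toR u + detR (toR u) (toR m) • toR w
        ∈ coneOf ρ₁ ρ₂ :=
      cone_add hdpos (cone_smul hdpos hA.le huc) (cone_smul hdpos hB.le hwc)
    rw [← h] at h2
    have h3 := cone_smul hdpos (inv_nonneg.mpr hD.le) h2
    rwa [smul_smul, inv_mul_cancel₀ hDne, one_smul] at h3
  have hMhull : toR m ∈ hullOf ρ₁ ρ₂ := lattice_mem_hull hm0 hMc
  obtain ⟨y, hy, z, hz, hz0, hmyz⟩ : ∃ y ∈ hullOf ρ₁ ρ₂, ∃ z ∈ coneOf ρ₁ ρ₂,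
      z ≠ 0 ∧ toR m = y + z := by
    by_contra hc; exact hnb m hb ha ⟨hMhull, hc⟩
  have hzMy : z = toR m - y := by rw [hmyz]; abel
  -- the auxiliary lattice point r = u + w - m
  have hrval : det2 u (u + w - m) = det2 u w - det2 u m := by
    simp [det2]; ring
  have hrval2 : det2 (u + w - m) w = det2 u w - det2 m w := by
    simp [det2]; ring
  have hrpos : 0 < det2 u (u + w - m) := by omega
  have hrpos2 : 0 < det2 (u + w - m) w := by omega
  have hr0 : (u + w - m) ≠ 0 := by
    intro h; rw [h] at hrpos; simp [det2] at hrpos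
  have hrc : toR (u + w - m) ∈ coneOf ρ₁ ρ₂ := by
    have hco : detR (toR u) (toR w) • (toR u + toR w - toR m)
        = (detR (toR u) (toR w) - detR (toR m) (toR w)) • toR u
          + (detR (toR u) (toR w) - detR (toR u) (toR m)) • toR w := by
      have h := cramer (toR u) (toR w) (toR m)
      rw [sub_smul, sub_smul]
      rw [smul_sub, smul_add, h]
      abel
    have h2 : (detR (toR u) (toR w) - detR (toR m) (toR w)) • toR u
          + (detR (toR u) (toR w) - detR (toR u) (toR m)) • toR w ∈ coneOf ρ₁ ρ₂ :=
      cone_add hdpos (cone_smul hdpos (by linarith) huc) (cone_smul hdpos (by linarith) hwc)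
    rw [← hco] at h2
    have h3 := cone_smul hdpos (inv_nonneg.mpr hD.le) h2
    rw [smul_smul, inv_mul_cancel₀ hDne, one_smul] at h3
    have : toR (u + w - m) = toR u + toR w - toR m := by
      rw [toR_sub, toR_add]
    rwa [this]
  have hrhull : toR (u + w - m) ∈ hullOf ρ₁ ρ₂ := lattice_mem_hull hr0 hrc
  -- contradiction helpers for hull points on the boundary rays
  have contraU : ∀ ω ∈ hullOf ρ₁ ρ₂, detR (toR u) ω = 0 →
      detR ω (toR w) < detR (toR u) (toR w) → False := by
    intro ω hωh hω0 hωlt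
    have hωc := hull_subset_cone hdpos hωh
    obtain ⟨c, hcω⟩ := parallel_scale hu0 hω0
    rw [hcω] at hωc
    have hc0 : 0 ≤ c := scale_nonneg hdpos huc hu0 hωc
    have hc1 : c < 1 := by
      rw [hcω, detR_smul_left] at hωlt
      nlinarith
    refine hu_min ω hωh ((1 - c) • toR u)
      (cone_smul hdpos (by linarith) huc)
      (smul_ne_zero (by intro h; linarith) hu0) ?_
    rw [hcω]; module
  have contraW : ∀ ω ∈ hullOf ρ₁ ρ₂, detR ω (toR w) = 0 →
      detR (toR u) ω < detR (toR u) (toR w) → False := by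
    intro ω hωh hω0 hωlt
    have hωc := hull_subset_cone hdpos hωh
    have hω0' : detR (toR w) ω = 0 := by rw [detR_swap] at hω0; linarith
    obtain ⟨c, hcω⟩ := parallel_scale hw0 hω0'
    rw [hcω] at hωc
    have hc0 : 0 ≤ c := scale_nonneg hdpos hwc hw0 hωc
    have hc1 : c < 1 := by
      rw [hcω, detR_smul_right] at hωlt
      nlinarith
    refine hw_min ω hωh ((1 - c) • toR w)
      (cone_smul hdpos (by linarith) hwc)
      (smul_ne_zero (by intro h; linarith) hw0) ?_
    rw [hcω]; module
  -- main case analysis on the position of y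
  rcases lt_or_ge (detR (toR u) y) 0 with hy1 | hy1
  · -- Case 1 : y is strictly on the ρ₁-side of the ray through u
    obtain ⟨θ, hθ0, hθ1, hθcross⟩ := segment_cross (fun x => detR (toR u) x)
      (isLinear_detR_right (toR u)) hy1 hB.le
    set ω := (1 - θ) • y + θ • toR m with hωdef
    have hωh : ω ∈ hullOf ρ₁ ρ₂ :=
      convex_convexHull ℝ _ hy hMhull (by linarith) (by linarith) (by ring)
    rcases lt_or_ge (detR ω (toR w)) (detR (toR u) (toR w)) with hcase | hcase
    · exact contraU ω hωh hθcross hcase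
    · -- c ≥ 1 : then m - u is in the cone; contradict minimality of w
      obtain ⟨c, hcω⟩ := parallel_scale hu0 hθcross
      have hc1 : 1 ≤ c := by
        rw [hcω, detR_smul_left] at hcase
        nlinarith
      have hMω : toR m - ω = (1 - θ) • z := by
        rw [hzMy, hωdef]; module
      have hωU : ω - toR u = (c - 1) • toR u := by
        rw [hcω]; module
      have hqc : toR (m - u) ∈ coneOf ρ₁ ρ₂ := by
        rw [toR_sub]
        have heq : toR m - toR u = (toR m - ω) + (ω - toR u) := by abel
        rw [heq, hMω, hωU]
        exact cone_add hdpos (cone_smul hdpos (by linarith) hz)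
          (cone_smul hdpos (by linarith) huc)
      have hq0 : toR (m - u) ≠ 0 := by
        intro h
        have : m - u = 0 := toR_eq_zero.mp h
        have : det2 u (m - u) = 0 := by rw [this]; simp [det2]
        have h2 : det2 u (m - u) = det2 u m := by simp [det2]; ring
        omega
      refine hw_min (toR (u + w - m)) hrhull (toR (m - u)) hqc hq0 ?_
      rw [← toR_add]
      congr 1
      abel
  · rcases lt_or_ge (detR y (toR w)) 0 with hy2 | hy2
    · -- Case 2 : y is strictly on the ρ₂-side of the ray through w
      obtain ⟨θ, hθ0, hθ1, hθcross⟩ := segment_cross (fun x => detR x (toR w))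
        (isLinear_detR_left (toR w)) hy2 hA.le
      set ω := (1 - θ) • y + θ • toR m with hωdef
      have hωh : ω ∈ hullOf ρ₁ ρ₂ :=
        convex_convexHull ℝ _ hy hMhull (by linarith) (by linarith) (by ring)
      rcases lt_or_ge (detR (toR u) ω) (detR (toR u) (toR w)) with hcase | hcase
      · exact contraW ω hωh hθcross hcase
      · obtain ⟨c, hcω⟩ := parallel_scale hw0 (by rw [detR_swap] at hθcross ⊢; linarith)
        have hc1 : 1 ≤ c := by
          rw [hcω, detR_smul_right] at hcase
          nlinarith
        have hMω : toR m - ω = (1 - θ) • z := by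
          rw [hzMy, hωdef]; module
        have hωW : ω - toR w = (c - 1) • toR w := by
          rw [hcω]; module
        have hqc : toR (m - w) ∈ coneOf ρ₁ ρ₂ := by
          rw [toR_sub]
          have heq : toR m - toR w = (toR m - ω) + (ω - toR w) := by abel
          rw [heq, hMω, hωW]
          exact cone_add hdpos (cone_smul hdpos (by linarith) hz)
            (cone_smul hdpos (by linarith) hwc)
        have hq0 : toR (m - w) ≠ 0 := by
          intro h
          have hmw : m - w = 0 := toR_eq_zero.mp h
          have : det2 (m - w) w = 0 := by rw [hmw]; simp [det2]
          have h2 : det2 (m - w) w = det2 m w := by simp [det2]; ring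
          omega
        refine hu_min (toR (u + w - m)) hrhull (toR (m - w)) hqc hq0 ?_
        rw [← toR_add]
        congr 1
        abel
    · -- Case 3 : y lies in the closed sector spanned by u and w
      set φ : ℝ × ℝ → ℝ := fun x => detR x (toR w) + detR (toR u) x with hφdef
      have hφlin : IsLinearMap ℝ φ := by
        constructor
        · intro p q
          simp only [hφdef, detR_add_left, detR_add_right]; ring
        · intro c p
          simp only [hφdef, detR_smul_left, detR_smul_right, smul_eq_mul]; ring
      have hφM : φ (toR m) = detR (toR m) (toR w) + detR (toR u) (toR m) := rfl
      have hφMle : φ (toR m) ≤ detR (toR u) (toR w) := by rw [hφM]; linarith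
      have hφsplit : φ (toR m) = φ y + φ z := by
        rw [hmyz]; simp only [hφdef, detR_add_left, detR_add_right]; ring
      rcases lt_or_ge 0 (φ z) with hφz | hφz
      · -- Subcase 3a : φ(z) > 0, use a lattice point below y
        have hφy : φ y < φ (toR m) := by linarith
        obtain ⟨l, hl0, hlc, hlle⟩ := exists_lattice_le hy φ hφlin
        have hφl : φ (toR l) = ((det2 l w : ℤ) : ℝ) + ((det2 u l : ℤ) : ℝ) := by
          simp only [hφdef, detR_toR]
        have hlint : ((det2 l w + det2 u l : ℤ) : ℝ) < ((det2 u m + det2 m w : ℤ) : ℝ) := by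
          push_cast
          push_cast at hφl
          rw [hφM] at hφy
          rw [detR_toR, detR_toR] at hφy
          push_cast at hφy
          linarith [hlle, hφl]
        have hlsum : det2 l w + det2 u l < det2 u m + det2 m w := by exact_mod_cast hlint
        rcases lt_or_ge 0 (det2 u l) with he2 | he2
        · rcases lt_or_ge 0 (det2 l w) with he1 | he1
          · -- l in the open sector : recurse
            exact IH l he2 he1 (by omega) (by omega)
          · -- l on or beyond the ray of w
            have hlhull : toR l ∈ hullOf ρ₁ ρ₂ := lattice_mem_hull hl0 hlc
            rcases eq_or_lt_of_le he1 with he1' | he1'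
            · -- exactly on the ray of w
              refine contraW (toR l) hlhull ?_ ?_
              · rw [detR_toR]; exact_mod_cast he1'
              · rw [detR_toR, detR_toR]
                exact_mod_cast (by omega : det2 u l < det2 u w)
            · -- strictly beyond : cross the segment [l, y] with the ray of w
              obtain ⟨θ, hθ0, hθ1, hθcross⟩ := segment_cross (fun x => detR x (toR w))
                (isLinear_detR_left (toR w))
                (by show detR (toR l) (toR w) < 0
                    rw [detR_toR]; exact_mod_cast he1') hy2
              set ω := (1 - θ) • toR l + θ • y with hωdef
              have hωh : ω ∈ hullOf ρ₁ ρ₂ :=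
                convex_convexHull ℝ _ hlhull hy (by linarith) (by linarith) (by ring)
              refine contraW ω hωh hθcross ?_
              have hφω : φ ω = (1 - θ) * φ (toR l) + θ * φ y := by
                rw [hωdef, hφlin.map_add, hφlin.map_smul, hφlin.map_smul]
                simp [smul_eq_mul]
              have hφωlt : φ ω < detR (toR u) (toR w) := by
                rw [hφω]
                apply combo_lt (by linarith) (by linarith) (by ring)
                · rw [hφl]
                  push_cast
                  have : (det2 l w + det2 u l : ℝ) < (det2 u w : ℝ) := by
                    exact_mod_cast (by omega : det2 l w + det2 u l < det2 u w)
                  push_cast at this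
                  linarith
                · linarith
              have : φ ω = detR ω (toR w) + detR (toR u) ω := rfl
              rw [this, hθcross] at hφωlt
              linarith
        · -- l on, or beyond, the ray of u
          have hlhull : toR l ∈ hullOf ρ₁ ρ₂ := lattice_mem_hull hl0 hlc
          rcases eq_or_lt_of_le he2 with he2' | he2'
          · refine contraU (toR l) hlhull ?_ ?_
            · rw [detR_toR]; exact_mod_cast he2'
            · rw [detR_toR, detR_toR]
              exact_mod_cast (by omega : det2 l w < det2 u w)
          · obtain ⟨θ, hθ0, hθ1, hθcross⟩ := segment_cross (fun x => detR (toR u) x)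
              (isLinear_detR_right (toR u))
              (by show detR (toR u) (toR l) < 0
                  rw [detR_toR]; exact_mod_cast he2') hy1
            set ω := (1 - θ) • toR l + θ • y with hωdef
            have hωh : ω ∈ hullOf ρ₁ ρ₂ :=
              convex_convexHull ℝ _ hlhull hy (by linarith) (by linarith) (by ring)
            refine contraU ω hωh hθcross ?_
            have hφω : φ ω = (1 - θ) * φ (toR l) + θ * φ y := by
              rw [hωdef, hφlin.map_add, hφlin.map_smul, hφlin.map_smul]
              simp [smul_eq_mul]
            have hφωlt : φ ω < detR (toR u) (toR w) := by
              rw [hφω]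
              apply combo_lt (by linarith) (by linarith) (by ring)
              · rw [hφl]
                push_cast
                have : (det2 l w + det2 u l : ℝ) < (det2 u w : ℝ) := by
                  exact_mod_cast (by omega : det2 l w + det2 u l < det2 u w)
                push_cast at this
                linarith
              · linarith
            have : φ ω = detR ω (toR w) + detR (toR u) ω := rfl
            rw [this, hθcross] at hφωlt
            linarith
      · -- Subcase 3b : φ(z) ≤ 0
        have hzcoord : detR (toR u) z < 0 ∨ detR z (toR w) < 0 := by
          by_contra hcon
          push_neg at hcon
          have h1 : 0 ≤ detR (toR u) z := hcon.1
          have h2 : 0 ≤ detR z (toR w) := hcon.2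
          have hz1 : detR (toR u) z = 0 := by
            have : φ z = detR z (toR w) + detR (toR u) z := rfl
            rw [this] at hφz; linarith
          have hz2 : detR z (toR w) = 0 := by
            have : φ z = detR z (toR w) + detR (toR u) z := rfl
            rw [this] at hφz; linarith
          have hcr := cramer (toR u) (toR w) z
          rw [hz1, hz2, zero_smul, zero_smul, add_zero] at hcr
          have : z = 0 := by
            have h3 := congrArg (fun p => (detR (toR u) (toR w))⁻¹ • p) hcr
            simp only [smul_smul, inv_mul_cancel₀ hDne, one_smul, smul_zero] at h3
            exact h3
          exact hz0 this
        rcases hzcoord with hzc | hzc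
        · -- z strictly on the ρ₁-side : follow the ray y + t z until the ray of u
          set t₁ := detR (toR u) y / (- detR (toR u) z) with ht₁def
          have hden : 0 < - detR (toR u) z := by linarith
          have ht₁1 : 1 < t₁ := by
            rw [ht₁def, lt_div_iff₀ hden]
            have : detR (toR u) y + detR (toR u) z = detR (toR u) (toR m) := by
              rw [hmyz, detR_add_right]
            nlinarith
          set ω := y + t₁ • z with hωdef
          have hωh : ω ∈ hullOf ρ₁ ρ₂ :=
            hull_add_cone hdpos hy (cone_smul hdpos (by linarith) hz)
          have hω0 : detR (toR u) ω = 0 := by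
            rw [hωdef, detR_add_right, detR_smul_right, ht₁def]
            field_simp
            rw [div_self (ne_of_lt hzc)]; ring
          have hφω : φ ω ≤ detR (toR u) (toR w) := by
            have h1 : φ ω = φ y + t₁ * φ z := by
              rw [hωdef, hφlin.map_add, hφlin.map_smul]; simp [smul_eq_mul]
            have h2 : φ y + t₁ * φ z ≤ φ y + φ z := by nlinarith
            rw [h1]
            calc φ y + t₁ * φ z ≤ φ y + φ z := h2
              _ = φ (toR m) := hφsplit.symm
              _ ≤ detR (toR u) (toR w) := hφMle
          rcases lt_or_ge (detR ω (toR w)) (detR (toR u) (toR w)) with hcase | hcase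
          · exact contraU ω hωh hω0 hcase
          · -- then ω = u exactly, contradicting minimality of u directly
            have hφω' : φ ω = detR ω (toR w) + detR (toR u) ω := rfl
            have heq : detR ω (toR w) = detR (toR u) (toR w) := by
              rw [hφω', hω0] at hφω; linarith
            obtain ⟨c, hcω⟩ := parallel_scale hu0 hω0
            have hc1 : c = 1 := by
              rw [hcω, detR_smul_left] at heq
              apply mul_right_cancel₀ hDne
              rw [one_mul]; exact heq
            have hωu : ω = toR u := by rw [hcω, hc1, one_smul]
            refine hu_min y hy (t₁ • z) (cone_smul hdpos (by linarith) hz)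
              (smul_ne_zero (ne_of_gt (by linarith)) hz0) ?_
            rw [← hωu, hωdef]
        · -- z strictly on the ρ₂-side : follow the ray y + t z until the ray of w
          set t₁ := detR y (toR w) / (- detR z (toR w)) with ht₁def
          have hden : 0 < - detR z (toR w) := by linarith
          have ht₁1 : 1 < t₁ := by
            rw [ht₁def, lt_div_iff₀ hden]
            have : detR y (toR w) + detR z (toR w) = detR (toR m) (toR w) := by
              rw [hmyz, detR_add_left]
            nlinarith
          set ω := y + t₁ • z with hωdef
          have hωh : ω ∈ hullOf ρ₁ ρ₂ :=
            hull_add_cone hdpos hy (cone_smul hdpos (by linarith) hz)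
          have hω0 : detR ω (toR w) = 0 := by
            rw [hωdef, detR_add_left, detR_smul_left, ht₁def]
            field_simp
            rw [div_self (ne_of_lt hzc)]; ring
          have hφω : φ ω ≤ detR (toR u) (toR w) := by
            have h1 : φ ω = φ y + t₁ * φ z := by
              rw [hωdef, hφlin.map_add, hφlin.map_smul]; simp [smul_eq_mul]
            have h2 : φ y + t₁ * φ z ≤ φ y + φ z := by nlinarith
            rw [h1]
            calc φ y + t₁ * φ z ≤ φ y + φ z := h2
              _ = φ (toR m) := hφsplit.symm
              _ ≤ detR (toR u) (toR w) := hφMle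
          rcases lt_or_ge (detR (toR u) ω) (detR (toR u) (toR w)) with hcase | hcase
          · exact contraW ω hωh hω0 hcase
          · have hφω' : φ ω = detR ω (toR w) + detR (toR u) ω := rfl
            have heq : detR (toR u) ω = detR (toR u) (toR w) := by
              rw [hφω', hω0] at hφω; linarith
            obtain ⟨c, hcω⟩ := parallel_scale hw0 (by rw [detR_swap] at hω0 ⊢; linarith)
            have hc1 : c = 1 := by
              rw [hcω, detR_smul_right] at heq
              apply mul_right_cancel₀ hDne
              rw [one_mul]; exact heq
            have hωw : ω = toR w := by rw [hcω, hc1, one_smul]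
            refine hw_min y hy (t₁ • z) (cone_smul hdpos (by linarith) hz)
              (smul_ne_zero (ne_of_gt (by linarith)) hz0) ?_
            rw [← hωw, hωdef]

lemma det2_swap (a b : ℤ × ℤ) : det2 a b = - det2 b a := by simp [det2]; ring

lemma cramer_int (a b c : ℤ × ℤ) :
    det2 a b • c = det2 c b • a + det2 a c • b := by
  refine Prod.ext ?_ ?_ <;>
    simp [det2, Prod.smul_fst, Prod.smul_snd, smul_eq_mul] <;> ring


set_option maxHeartbeats 1000000 in
/-- Minimal desingularization of a 2-dimensional cyclic quotient singularity:
if `ρ₁, ρ₂` are primitive with `det(ρ₁, ρ₂) = d₀ > 1`, and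
`v₀ = ρ₁, v₁, …, vₖ, vₖ₊₁ = ρ₂` enumerate (counterclockwise) the lattice
points on the compact boundary of `Conv(σ ∩ (ℤ² \ {0}))`, then each
consecutive pair `(vᵢ, vᵢ₊₁)` is a ℤ-basis of ℤ², and for `1 ≤ i ≤ k` there
are integers `aᵢ ≤ −2` with `vᵢ₋₁ + vᵢ₊₁ + aᵢ vᵢ = 0`. -/
theorem minimal_resolution_boundary (ρ₁ ρ₂ : ℤ × ℤ) (d₀ : ℕ) (hd : 1 < d₀)
    (hp₁ : IsCoprime ρ₁.1 ρ₁.2) (hp₂ : IsCoprime ρ₂.1 ρ₂.2)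
    (hdet : det2 ρ₁ ρ₂ = (d₀ : ℤ))
    (k : ℕ) (v : ℕ → ℤ × ℤ)
    (hv0 : v 0 = ρ₁) (hvlast : v (k + 1) = ρ₂)
    (hbdry : ∀ m : ℤ × ℤ, toR m ∈ compactBoundary ρ₁ ρ₂ ↔ ∃ i ≤ k + 1, v i = m)
    (horder : ∀ i j, i < j → j ≤ k + 1 → 0 < det2 (v i) (v j)) :
    (∀ i ≤ k, (det2 (v i) (v (i + 1))).natAbs = 1) ∧
    (∀ i, 1 ≤ i → i ≤ k → ∃ a : ℤ, a ≤ -2 ∧ v (i - 1) + v (i + 1) + a • v i = 0) := by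
  have hdpos : 0 < detR (toR ρ₁) (toR ρ₂) := by
    rw [detR_toR, hdet]
    exact_mod_cast (by omega : (0:ℤ) < (d₀ : ℤ))
  -- every v j is on the compact boundary
  have hvB : ∀ j ≤ k + 1, toR (v j) ∈ compactBoundary ρ₁ ρ₂ := fun j hj =>
    (hbdry (v j)).mpr ⟨j, hj, rfl⟩
  have hvhull : ∀ j ≤ k + 1, toR (v j) ∈ hullOf ρ₁ ρ₂ := fun j hj => (hvB j hj).1
  have hvcone : ∀ j ≤ k + 1, toR (v j) ∈ coneOf ρ₁ ρ₂ := fun j hj =>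
    hull_subset_cone hdpos (hvhull j hj)
  have hmin : ∀ j ≤ k + 1, ∀ y ∈ hullOf ρ₁ ρ₂, ∀ z ∈ coneOf ρ₁ ρ₂,
      z ≠ 0 → toR (v j) ≠ y + z := by
    intro j hj y hy z hz hz0 heq
    exact (hvB j hj).2 ⟨y, hy, z, hz, hz0, heq⟩
  have hvne : ∀ j ≤ k + 1, v j ≠ 0 := by
    intro j hj h0
    rcases Nat.eq_zero_or_pos j with rfl | hjpos
    · have := horder 0 (k+1) (by omega) (le_refl _)
      rw [h0] at this; simp [det2] at this
    · have := horder 0 j (by omega) hj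
      rw [h0] at this; simp [det2] at this
  -- each v j is primitive
  have hprim : ∀ j ≤ k + 1, IsCoprime (v j).1 (v j).2 := by
    intro j hj
    rw [Int.isCoprime_iff_gcd_eq_one]
    by_contra hg
    set g : ℕ := Int.gcd (v j).1 (v j).2 with hgdef
    have hg0 : g ≠ 0 := by
      intro h0
      exact hvne j hj (by
        have := Int.gcd_eq_zero_iff.mp (hgdef ▸ h0)
        exact Prod.ext_iff.mpr this)
    have hg2 : 2 ≤ g := by omega
    have hd1 : (g:ℤ) ∣ (v j).1 := Int.gcd_dvd_left _ _
    have hd2 : (g:ℤ) ∣ (v j).2 := Int.gcd_dvd_right _ _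
    set p : ℤ × ℤ := ((v j).1 / g, (v j).2 / g) with hpdef
    have hvp1 : (v j).1 = (g:ℤ) * p.1 := (Int.mul_ediv_cancel' hd1).symm
    have hvp2 : (v j).2 = (g:ℤ) * p.2 := (Int.mul_ediv_cancel' hd2).symm
    have hp0 : p ≠ 0 := by
      intro h0
      apply hvne j hj
      have h01 : p.1 = 0 := by rw [h0]; simp
      have h02 : p.2 = 0 := by rw [h0]; simp
      rw [Prod.ext_iff]
      constructor
      · rw [hvp1, h01]; simp
      · rw [hvp2, h02]; simp
    have htvp : toR (v j) = (g:ℝ) • toR p := by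
      refine Prod.ext ?_ ?_
      · show ((v j).1 : ℝ) = (g:ℝ) * (p.1 : ℝ)
        rw [hvp1]; push_cast; ring
      · show ((v j).2 : ℝ) = (g:ℝ) * (p.2 : ℝ)
        rw [hvp2]; push_cast; ring
    have hgR : (0:ℝ) < (g:ℝ) := by exact_mod_cast (by omega : 0 < g)
    have hpc : toR p ∈ coneOf ρ₁ ρ₂ := by
      have h1 := cone_smul hdpos (inv_nonneg.mpr hgR.le) (hvcone j hj)
      rw [htvp, smul_smul, inv_mul_cancel₀ (ne_of_gt hgR), one_smul] at h1
      exact h1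
    have hp0R : toR p ≠ 0 := fun h => hp0 (toR_eq_zero.mp h)
    have hg1R : (1:ℝ) ≤ (g:ℝ) := by exact_mod_cast (by omega : 1 ≤ g)
    refine hmin j hj (toR p) (lattice_mem_hull hp0 hpc)
      (((g:ℝ) - 1) • toR p) (cone_smul hdpos (by linarith) hpc) ?_ ?_
    · refine smul_ne_zero ?_ hp0R
      have : (2:ℝ) ≤ (g:ℝ) := by exact_mod_cast hg2
      intro h; linarith
    · rw [htvp]; module
  -- part 1 : consecutive determinants are 1
  have hpart1 : ∀ i ≤ k, det2 (v i) (v (i + 1)) = 1 := by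
    intro i hi
    have hDpos : 0 < det2 (v i) (v (i + 1)) := horder i (i+1) (by omega) (by omega)
    by_contra hne1
    have hD2 : 2 ≤ det2 (v i) (v (i + 1)) := by omega
    obtain ⟨a, b, hab⟩ := hprim i (by omega)
    set p₀ : ℤ × ℤ := (-b, a) with hp₀def
    have hp₀1 : det2 (v i) p₀ = 1 := by
      simp only [det2, hp₀def]
      linarith [hab]
    set e : ℤ := (det2 p₀ (v (i+1)) - 1) % det2 (v i) (v (i + 1)) with hedef
    have he0 : 0 ≤ e := Int.emod_nonneg _ (by omega)
    have heD : e < det2 (v i) (v (i + 1)) := Int.emod_lt_of_pos _ (by omega)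
    have hemod := Int.emod_def (det2 p₀ (v (i+1)) - 1) (det2 (v i) (v (i + 1)))
    set q : ℤ := (det2 p₀ (v (i+1)) - 1) / det2 (v i) (v (i + 1)) with hqdef
    set p : ℤ × ℤ := p₀ + (-q) • (v i) with hppdef
    have hdet2p : det2 (v i) p = 1 := by
      have h1 : det2 (v i) p = det2 (v i) p₀ + (-q) * det2 (v i) (v i) := by
        simp only [det2, hppdef, Prod.fst_add, Prod.snd_add, Prod.smul_fst,
          Prod.smul_snd, smul_eq_mul]
        ring
      have h2 : det2 (v i) (v i) = 0 := by unfold det2; ring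
      rw [h1, h2, hp₀1]; ring
    have hdet2pw : det2 p (v (i+1)) = e + 1 := by
      have h1 : det2 p (v (i+1)) = det2 p₀ (v (i+1)) + (-q) * det2 (v i) (v (i+1)) := by
        simp only [det2, hppdef, Prod.fst_add, Prod.snd_add, Prod.smul_fst,
          Prod.smul_snd, smul_eq_mul]
        ring
      rw [h1]
      have h2 : e = det2 p₀ (v (i+1)) - 1
          - det2 (v i) (v (i + 1)) * q := by rw [hedef, hemod]
      linarith
    have hnb : ∀ m : ℤ × ℤ, 0 < det2 (v i) m → 0 < det2 m (v (i+1)) →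
        toR m ∉ compactBoundary ρ₁ ρ₂ := by
      intro m h1 h2 hcB
      obtain ⟨j, hj, hjm⟩ := (hbdry m).mp hcB
      rw [← hjm] at h1 h2
      rcases lt_trichotomy j i with hji | hji | hji
      · have h3 := horder j i hji (by omega)
        have hsw := det2_swap (v j) (v i)
        omega
      · rw [hji] at h1
        have h4 : det2 (v i) (v i) = 0 := by unfold det2; ring
        omega
      · rcases lt_trichotomy j (i+1) with hji2 | hji2 | hji2
        · omega
        · rw [hji2] at h2
          have h4 : det2 (v (i+1)) (v (i+1)) = 0 := by unfold det2; ring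
          omega
        · have h3 := horder (i+1) j hji2 hj
          have hsw := det2_swap (v j) (v (i+1))
          omega
    rcases le_or_gt (e + 2) (det2 (v i) (v (i + 1))) with hcase | hcase
    · exact sector_step ρ₁ ρ₂ hdpos (v i) (v (i+1)) (hvcone i (by omega))
        (hvcone (i+1) (by omega)) (hmin i (by omega)) (hmin (i+1) (by omega)) hnb
        ((det2 (v i) p + det2 p (v (i+1))).toNat) p (by omega) (by omega)
        (by omega) (le_refl _)
    · -- e = D - 1 : then v (i+1) would be divisible by D ≥ 2
      have hpw : det2 p (v (i+1)) = det2 (v i) (v (i + 1)) := by omega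
      have hcr := cramer_int (v i) (v (i+1)) p
      have hw1 : (v (i+1)).1 = det2 (v i) (v (i + 1)) * (p.1 - (v i).1) := by
        have h1 := congrArg Prod.fst hcr
        simp only [Prod.fst_add, Prod.smul_fst, smul_eq_mul] at h1
        rw [hdet2p, hpw] at h1
        linear_combination -h1
      have hw2 : (v (i+1)).2 = det2 (v i) (v (i + 1)) * (p.2 - (v i).2) := by
        have h1 := congrArg Prod.snd hcr
        simp only [Prod.snd_add, Prod.smul_snd, smul_eq_mul] at h1
        rw [hdet2p, hpw] at h1
        linear_combination -h1
      obtain ⟨a', b', hab'⟩ := hprim (i+1) (by omega)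
      have hdvd : det2 (v i) (v (i + 1)) ∣ 1 := by
        refine ⟨a' * (p.1 - (v i).1) + b' * (p.2 - (v i).2), ?_⟩
        rw [← hab', hw1, hw2]
        ring
      have := Int.le_of_dvd one_pos hdvd
      omega
  constructor
  · intro i hi
    rw [hpart1 i hi]
    rfl
  · -- part 2
    intro i hi1 hik
    have hi' : i - 1 + 1 = i := by omega
    have d1 : det2 (v (i-1)) (v i) = 1 := by
      have := hpart1 (i-1) (by omega)
      rwa [hi'] at this
    have d2 : det2 (v i) (v (i+1)) = 1 := hpart1 i hik
    have hβpos : 0 < det2 (v (i-1)) (v (i+1)) := by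
      have := horder (i-1) (i+1) (by omega) (by omega)
      exact this
    refine ⟨- det2 (v (i-1)) (v (i+1)), ?_, ?_⟩
    · -- β ≥ 2
      have hβ1 : det2 (v (i-1)) (v (i+1)) ≠ 1 := by
        intro hβ
        -- then v i = v (i-1) + v (i+1), contradicting minimality of v i
        have hcr := cramer_int (v (i-1)) (v i) (v (i+1))
        rw [d1, one_smul, hβ, one_smul] at hcr
        have hsw : det2 (v (i+1)) (v i) = - det2 (v i) (v (i+1)) := det2_swap _ _
        rw [hsw, d2] at hcr
        -- hcr : v (i+1) = (-1) • v (i-1) + v i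
        have hvi : v i = v (i-1) + v (i+1) := by
          have h1 := congrArg Prod.fst hcr
          have h2 := congrArg Prod.snd hcr
          simp only [Prod.fst_add, Prod.snd_add, Prod.smul_fst, Prod.smul_snd,
            smul_eq_mul] at h1 h2
          rw [Prod.ext_iff]
          constructor
          · simp only [Prod.fst_add]; linarith
          · simp only [Prod.snd_add]; linarith
        have hC0 : v (i+1) ≠ 0 := hvne (i+1) (by omega)
        have hC0R : toR (v (i+1)) ≠ 0 := fun h => hC0 (toR_eq_zero.mp h)
        refine hmin i (by omega) (toR (v (i-1))) (hvhull (i-1) (by omega))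
          (toR (v (i+1))) (hvcone (i+1) (by omega)) hC0R ?_
        rw [← toR_add, hvi]
      omega
    · -- the linear relation
      have hcr := cramer_int (v (i-1)) (v i) (v (i+1))
      rw [d1, one_smul] at hcr
      have hsw : det2 (v (i+1)) (v i) = - det2 (v i) (v (i+1)) := det2_swap _ _
      rw [hsw, d2] at hcr
      -- hcr : v (i+1) = (-1) • v (i-1) + det2 (v (i-1)) (v (i+1)) • v i
      have h1 := congrArg Prod.fst hcr
      have h2 := congrArg Prod.snd hcr
      simp only [Prod.fst_add, Prod.snd_add, Prod.smul_fst, Prod.smul_snd,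
        smul_eq_mul] at h1 h2
      rw [Prod.ext_iff]
      constructor
      · simp only [Prod.fst_add, Prod.smul_fst, smul_eq_mul, Prod.fst_zero]
        linarith
      · simp only [Prod.snd_add, Prod.smul_snd, smul_eq_mul, Prod.snd_zero]
        linarith
end

section
/- Let v₀, v₁, …, vₖ₊₁ be lattice vectors in ℤ² such that each consecutive pair is a ℤ-basis and vᵢ₋₁ + vᵢ₊₁ + aᵢvᵢ = 0 for integers aᵢ (1 ≤ i ≤ k). Then |det(v₀, vₖ₊₁)| equals the absolute value of the determinant of the k×k tridiagonal matrix with diagonal entries a₁, …, aₖ and off-diagonal entries 1. -/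
/-- The `k×k` tridiagonal matrix with diagonal entries `a 1, …, a k` and
off-diagonal entries `1`. -/
def tridiag (k : ℕ) (a : ℕ → ℤ) : Matrix (Fin k) (Fin k) ℤ :=
  Matrix.of fun i j =>
    if (i : ℕ) = (j : ℕ) then a ((i : ℕ) + 1)
    else if (i : ℕ) + 1 = (j : ℕ) ∨ (j : ℕ) + 1 = (i : ℕ) then 1 else 0


lemma tridiag_det_rec (n : ℕ) (a : ℕ → ℤ) :
    (tridiag (n+2) a).det
      = a 1 * (tridiag (n+1) (fun m => a (m+1))).det
        - (tridiag n (fun m => a (m+2))).det := by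
  rw [Matrix.det_succ_row_zero, Fin.sum_univ_succ, Fin.sum_univ_succ]
  have hz : ∀ j : Fin n,
      (tridiag (n+2) a) 0 (Fin.succ (Fin.succ j)) = 0 := by
    intro j; simp [tridiag, Fin.val_succ]
  have h00 : (tridiag (n+2) a) 0 0 = a 1 := by simp [tridiag]
  have h01 : (tridiag (n+2) a) 0 (Fin.succ 0) = 1 := by simp [tridiag]
  simp only [hz, h00, h01, mul_zero, zero_mul, mul_one, Finset.sum_const_zero, add_zero]
  have hsub1 : (tridiag (n+2) a).submatrix Fin.succ ((0 : Fin (n+2)).succAbove)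
      = tridiag (n+1) (fun m => a (m+1)) := by
    ext i j
    simp only [tridiag, Matrix.submatrix_apply, Fin.succAbove_zero, Matrix.of_apply,
      Fin.val_succ]
    split_ifs <;> first | rfl | omega
  rw [hsub1]
  have hB : ((tridiag (n+2) a).submatrix Fin.succ ((Fin.succ 0 : Fin (n+2)).succAbove)).det
      = (tridiag n (fun m => a (m+2))).det := by
    rw [Matrix.det_succ_column_zero, Fin.sum_univ_succ]
    have hz2 : ∀ i : Fin n,
        ((tridiag (n+2) a).submatrix Fin.succ ((Fin.succ 0 : Fin (n+2)).succAbove))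
          (Fin.succ i) 0 = 0 := by
      intro i
      simp only [Matrix.submatrix_apply, tridiag, Matrix.of_apply]
      simp [Fin.succAbove, Fin.val_succ]
    have h10 : ((tridiag (n+2) a).submatrix Fin.succ ((Fin.succ 0 : Fin (n+2)).succAbove))
        0 0 = 1 := by
      simp only [Matrix.submatrix_apply, tridiag, Matrix.of_apply]
      simp [Fin.succAbove, Fin.val_succ]
    simp only [hz2, h10, mul_zero, zero_mul, mul_one, Finset.sum_const_zero, add_zero]
    have hsub2 : ((tridiag (n+2) a).submatrix Fin.succ
        ((Fin.succ 0 : Fin (n+2)).succAbove)).submatrix ((0 : Fin (n+1)).succAbove) Fin.succ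
        = tridiag n (fun m => a (m+2)) := by
      ext i j
      simp only [Matrix.submatrix_apply, Fin.succAbove_zero, tridiag, Matrix.of_apply,
        Fin.succ_succAbove_succ, Fin.val_succ]
      split_ifs <;> first | rfl | omega
    rw [hsub2]
    simp
  rw [hB]
  simp [Fin.val_succ]
  ring

lemma det2_expand (u w x : ℤ × ℤ) (c : ℤ) :
    det2 (-(u + c • w)) x = -det2 u x - c * det2 w x := by
  simp only [det2, Prod.fst_neg, Prod.snd_neg, Prod.fst_add, Prod.snd_add,
    Prod.smul_fst, Prod.smul_snd, smul_eq_mul]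
  ring

lemma det2_expand_right (x u w : ℤ × ℤ) (c : ℤ) :
    det2 x (-(u + c • w)) = -det2 x u - c * det2 x w := by
  simp only [det2, Prod.fst_neg, Prod.snd_neg, Prod.fst_add, Prod.snd_add,
    Prod.smul_fst, Prod.smul_snd, smul_eq_mul]
  ring

lemma det2_self (u : ℤ × ℤ) : det2 u u = 0 := by simp [det2]; ring

lemma det2_comm (u v : ℤ × ℤ) : det2 u v = -det2 v u := by simp [det2]; ring

lemma chain_solve {u w x : ℤ × ℤ} {c : ℤ} (h : u + x + c • w = 0) :
    x = -(u + c • w) := by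
  have : x = -(u + c • w) := by
    have h' : u + c • w + x = 0 := by rw [← h]; abel
    linear_combination (norm := abel) h'
  exact this

lemma chain_solve' {u w x : ℤ × ℤ} {c : ℤ} (h : u + x + c • w = 0) :
    u = -(x + c • w) := by
  linear_combination (norm := abel) h

lemma det2_consec (u w x : ℤ × ℤ) (c : ℤ) (h : u + x + c • w = 0) :
    det2 w x = det2 u w := by
  rw [chain_solve h, det2_expand_right, det2_self, det2_comm u w]
  ring

lemma key : ∀ (k : ℕ) (v : ℕ → ℤ × ℤ) (a : ℕ → ℤ),
    (∀ i, 1 ≤ i → i ≤ k → v (i - 1) + v (i + 1) + a i • v i = 0) →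
    det2 (v 0) (v (k + 1)) = (-1) ^ k * det2 (v 0) (v 1) * (tridiag k a).det := by
  intro k
  induction k using Nat.strong_induction_on with
  | _ k ih =>
    match k with
    | 0 =>
      intro v a _
      simp [tridiag, Matrix.det_isEmpty]
    | 1 =>
      intro v a hrel
      have h := hrel 1 le_rfl le_rfl
      have h2 : v 2 = -(v 0 + a 1 • v 1) := chain_solve h
      rw [show (1 + 1 : ℕ) = 2 from rfl, h2, det2_expand_right, det2_self]
      have hdet : (tridiag 1 a).det = a 1 := by
        rw [Matrix.det_fin_one]
        simp [tridiag]
      rw [hdet]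
      ring
    | (n+2) =>
      intro v a hrel
      have h1 := hrel 1 (by omega) (by omega)
      have h0 : v 0 = -(v 2 + a 1 • v 1) := chain_solve' h1
      have ih1 : det2 (v 1) (v (n + 3)) =
          (-1) ^ (n+1) * det2 (v 1) (v 2) * (tridiag (n+1) (fun m => a (m+1))).det := by
        have := ih (n+1) (by omega) (fun i => v (i+1)) (fun i => a (i+1))
          (fun i hi hik => by
            have := hrel (i+1) (by omega) (by omega)
            simpa [Nat.add_sub_cancel, show i + 1 - 1 = i - 1 + 1 from by omega,
              show i - 1 + 1 = i from by omega] using this)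
        simpa using this
      have ih2 : det2 (v 2) (v (n + 3)) =
          (-1) ^ n * det2 (v 2) (v 3) * (tridiag n (fun m => a (m+2))).det := by
        have := ih n (by omega) (fun i => v (i+2)) (fun i => a (i+2))
          (fun i hi hik => by
            have := hrel (i+2) (by omega) (by omega)
            simpa [show i + 2 - 1 = i - 1 + 2 from by omega,
              show i - 1 + 2 = i + 1 from by omega] using this)
        simpa [show n + 1 + 2 = n + 3 from by omega] using this
      have e1 : det2 (v 1) (v 2) = det2 (v 0) (v 1) :=
        det2_consec _ _ _ _ (hrel 1 (by omega) (by omega))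
      have e2 : det2 (v 2) (v 3) = det2 (v 1) (v 2) :=
        det2_consec _ _ _ _ (hrel 2 (by omega) (by omega))
      have hL : det2 (v 0) (v (n + 3)) =
          -det2 (v 2) (v (n + 3)) - a 1 * det2 (v 1) (v (n + 3)) := by
        rw [h0, det2_expand]
      rw [show n + 2 + 1 = n + 3 from rfl, hL, ih1, ih2, e2, e1, tridiag_det_rec]
      ring

/-- For a chain `v₀, …, vₖ₊₁` of lattice vectors in ℤ² with each consecutive
pair a ℤ-basis and `vᵢ₋₁ + vᵢ₊₁ + aᵢ vᵢ = 0` (`1 ≤ i ≤ k`), the quantity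
`|det(v₀, vₖ₊₁)|` equals the absolute value of the determinant of the `k×k`
tridiagonal matrix with diagonal `a₁, …, aₖ` and off-diagonal entries `1`. -/
theorem chain_det_tridiag (k : ℕ) (v : ℕ → ℤ × ℤ) (a : ℕ → ℤ)
    (hbasis : ∀ i ≤ k, (det2 (v i) (v (i + 1))).natAbs = 1)
    (hrel : ∀ i, 1 ≤ i → i ≤ k → v (i - 1) + v (i + 1) + a i • v i = 0) :
    (det2 (v 0) (v (k + 1))).natAbs = ((tridiag k a).det).natAbs := by
  rw [key k v a hrel]
  have hε : (det2 (v 0) (v 1)).natAbs = 1 := hbasis 0 (Nat.zero_le k)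
  rw [Int.natAbs_mul, Int.natAbs_mul, hε, Int.natAbs_pow]
  simp
end
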